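/- arXiv:1909.09795 — 6 statements merged into one kernel-verified Lean document; each statement's English description precedes it below -/
import Mathlib

section
/- Let f : D → ℝ be of class C^{1,1}(D) on an open set D ⊆ X. If f is twice continuously Gâteaux differentiable at x̂ ∈ D, then ∂²f(x̂)(d) = {f''(x̂)(d)} for every d ∈ X, i.e., the second-order subdifferential is the singleton consisting of the second Gâteaux derivative applied to d. -/
open Filter Set

/-- The Clarke generalized directional derivative of `g` at `x₀` in direction `h`. -/
noncomputable def clarkeDeriv {X : Type*} [NormedAddCommGroup X] [NormedSpace ℝ X]
    (g : X → ℝ) (x₀ h : X) : ℝ :=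
  Filter.limsup (fun p : X × ℝ => (g (p.1 + p.2 • h) - g p.1) / p.2)
    ((nhds x₀) ×ˢ (nhdsWithin 0 (Set.Ioi 0)))

/-- The Clarke subdifferential of `g` at `x₀`. -/
def clarkeSubdiff {X : Type*} [NormedAddCommGroup X] [NormedSpace ℝ X]
    (g : X → ℝ) (x₀ : X) : Set (X →L[ℝ] ℝ) :=
  {L | ∀ h, L h ≤ clarkeDeriv g x₀ h}

/-- `f'` is the Gâteaux derivative of `f` on `D`. -/
def IsGateauxDerivOn {X E : Type*} [NormedAddCommGroup X] [NormedSpace ℝ X]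
    [NormedAddCommGroup E] [NormedSpace ℝ E]
    (f : X → E) (f' : X → X →L[ℝ] E) (D : Set X) : Prop :=
  ∀ x ∈ D, ∀ h : X, HasDerivAt (fun t : ℝ => f (x + t • h)) (f' x h) 0

/-- `g` is locally Lipschitz on the set `D`. -/
def LocallyLipschitzOnSet {X E : Type*} [NormedAddCommGroup X] [NormedSpace ℝ X]
    [NormedAddCommGroup E] (g : X → E) (D : Set X) : Prop :=
  ∀ x ∈ D, ∃ ε > 0, ∃ K : NNReal, LipschitzOnWith K g (Metric.ball x ε ∩ D)

/-- `f` is of class `C^{1,1}` on `D`, witnessed by its Gâteaux derivative `f'`. -/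
def IsC11On {X : Type*} [NormedAddCommGroup X] [NormedSpace ℝ X]
    (f : X → ℝ) (f' : X → X →L[ℝ] ℝ) (D : Set X) : Prop :=
  IsGateauxDerivOn f f' D ∧ LocallyLipschitzOnSet f' D

/-- The second-order subdifferential `∂²f(x₀)(d) = ∂⟨f'(·), d⟩(x₀)`. -/
def secondSubdiff {X : Type*} [NormedAddCommGroup X] [NormedSpace ℝ X]
    (f' : X → X →L[ℝ] ℝ) (x₀ d : X) : Set (X →L[ℝ] ℝ) :=
  clarkeSubdiff (fun x => f' x d) x₀

/-!
A Gâteaux derivative that is continuous at `x₀` is a strict Fréchet derivative there, by the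
mean value inequality along segments. Applied to `f'`, this makes the Clarke difference quotients
of `x ↦ f' x d` converge, so its Clarke derivative is the linear form `h ↦ f'' x₀ h d`, and the
Clarke subdifferential of a function with linear Clarke derivative is that form alone. Applied
to `f`, whose derivative is continuous near `x₀` by the `C^{1,1}` assumption, it makes `f`
Fréchet differentiable near `x₀`, so `f'' x₀` is symmetric and `h ↦ f'' x₀ h d` is `f'' x₀ d`.
-/

open Topology Asymptotics

section

variable {X E : Type*} [NormedAddCommGroup X] [NormedSpace ℝ X]
  [NormedAddCommGroup E] [NormedSpace ℝ E]

namespace IsGateauxDerivOn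

variable {g : X → E} {g' : X → X →L[ℝ] E}

theorem hasDerivAt_comp_add_smul {s : Set X} (hg : IsGateauxDerivOn g g' s) {x v : X} {t : ℝ}
    (hx : x + t • v ∈ s) :
    HasDerivAt (fun τ : ℝ => g (x + τ • v)) (g' (x + t • v) v) t := by
  have h := HasDerivAt.comp_sub_const (f := fun τ : ℝ => g (x + t • v + τ • v)) t t
    (sub_self t ▸ hg _ hx v)
  convert h using 3 with τ
  module

theorem norm_image_sub_le {s : Set X} (hs : Convex ℝ s) (hg : IsGateauxDerivOn g g' s)
    {A : X →L[ℝ] E} {C : ℝ} (hbound : ∀ z ∈ s, ‖g' z - A‖ ≤ C) {x y : X}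
    (hx : x ∈ s) (hy : y ∈ s) :
    ‖g y - g x - A (y - x)‖ ≤ C * ‖y - x‖ := by
  have hseg : ∀ t ∈ Icc (0 : ℝ) 1, x + t • (y - x) ∈ s :=
    fun t ht => hs.add_smul_sub_mem hx hy ht
  have key := norm_image_sub_le_of_norm_deriv_le_segment'
    (f := fun t : ℝ => g (x + t • (y - x)) - t • A (y - x))
    (f' := fun t => (g' (x + t • (y - x)) - A) (y - x)) (C := C * ‖y - x‖)
    (fun t ht => by
      have h := (hg.hasDerivAt_comp_add_smul (hseg t ht)).sub ((hasDerivAt_id' t).smul_const (A (y - x)))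
      rw [one_smul, ← sub_apply] at h
      exact h.hasDerivWithinAt)
    (fun t ht => ((g' _ - A).le_opNorm _).trans <| by
      gcongr; exact hbound _ (hseg t (Ico_subset_Icc_self ht)))
    1 (right_mem_Icc.2 zero_le_one)
  simp only [one_smul, zero_smul, add_zero, add_sub_cancel, sub_zero, mul_one] at key
  convert key using 2
  abel

theorem hasStrictFDerivAt {D : Set X} (hg : IsGateauxDerivOn g g' D) {x : X} (hD : D ∈ 𝓝 x)
    (hc : ContinuousAt g' x) : HasStrictFDerivAt g (g' x) x := by
  rw [hasStrictFDerivAt_iff_isLittleO, isLittleO_iff]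
  refine fun c hc₀ => Metric.eventually_nhds_iff_ball.mpr ?_
  obtain ⟨ε, ε₀, hε⟩ := Metric.mem_nhds_iff.mp (inter_mem hD (hc <| Metric.ball_mem_nhds _ hc₀))
  refine ⟨ε, ε₀, ?_⟩
  rintro ⟨a, b⟩ hab
  rw [← ball_prod_same, prodMk_mem_set_prod_eq] at hab
  exact norm_image_sub_le (convex_ball x ε) (fun z hz => hg z (hε hz).1)
    (fun z hz => (mem_ball_iff_norm.1 (hε hz).2).le) hab.2 hab.1

end IsGateauxDerivOn

theorem IsC11On.eventually_hasFDerivAt {D : Set X} (hD : IsOpen D) {f : X → ℝ}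
    {f' : X → X →L[ℝ] ℝ} (hf : IsC11On f f' D) {x : X} (hx : x ∈ D) :
    ∀ᶠ y in 𝓝 x, HasFDerivAt f (f' y) y := by
  obtain ⟨ε, ε₀, K, hK⟩ := hf.2 x hx
  have hU : IsOpen (Metric.ball x ε ∩ D) := Metric.isOpen_ball.inter hD
  filter_upwards [hU.mem_nhds ⟨Metric.mem_ball_self ε₀, hx⟩] with y hy
  exact (hf.1.hasStrictFDerivAt (hD.mem_nhds hy.2)
    (hK.continuousOn.continuousAt (hU.mem_nhds hy))).hasFDerivAt

theorem HasStrictFDerivAt.clarkeDeriv_eq {g : X → ℝ} {L : X →L[ℝ] ℝ} {x : X}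
    (hg : HasStrictFDerivAt g L x) (h : X) : clarkeDeriv g x h = L h := by
  set F := 𝓝 x ×ˢ 𝓝[>] (0 : ℝ)
  have hpair : Tendsto (fun p : X × ℝ => (p.1 + p.2 • h, p.1)) F (𝓝 (x, x)) := by
    have hcont : Continuous fun p : X × ℝ => (p.1 + p.2 • h, p.1) := by fun_prop
    refine (hcont.tendsto' (x, 0) (x, x) (by simp)).mono_left ?_
    rw [nhds_prod_eq]
    exact prod_mono le_rfl nhdsWithin_le_nhds
  have hrem : (fun p : X × ℝ => g (p.1 + p.2 • h) - g p.1 - L (p.2 • h)) =o[F] fun p => p.2 := by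
    refine ((hg.isLittleO.comp_tendsto hpair).trans_isBigO ?_).congr_left fun p => ?_
    · exact isBigO_of_le' (c := ‖h‖) _ fun p => by simp [norm_smul, mul_comm]
    · simp
  have hquot : Tendsto (fun p : X × ℝ => (g (p.1 + p.2 • h) - g p.1) / p.2) F (𝓝 (L h)) := by
    have hpos : ∀ᶠ p : X × ℝ in F, p.2 ≠ 0 :=
      (tendsto_snd.eventually self_mem_nhdsWithin).mono fun p hp => (mem_Ioi.1 hp).ne'
    have hlim := hrem.tendsto_div_nhds_zero.add_const (L h)
    rw [zero_add] at hlim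
    refine hlim.congr' ?_
    filter_upwards [hpos] with p hp
    rw [map_smul, smul_eq_mul]
    field_simp
    ring
  exact hquot.limsup_eq

theorem clarkeSubdiff_eq_singleton {g : X → ℝ} {x : X} {L : X →L[ℝ] ℝ}
    (hg : ∀ h, clarkeDeriv g x h = L h) : clarkeSubdiff g x = {L} := by
  ext L'
  simp only [clarkeSubdiff, mem_ofPred_eq, mem_singleton_iff, hg]
  refine ⟨fun hL' => ContinuousLinearMap.ext fun h => le_antisymm (hL' h) ?_,
    fun hL' h => hL' ▸ le_rfl⟩
  simpa using hL' (-h)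

end

theorem stmt4 {X : Type*} [NormedAddCommGroup X] [NormedSpace ℝ X]
    {D : Set X} (hD : IsOpen D) (f : X → ℝ) (f' : X → X →L[ℝ] ℝ)
    (hf : IsC11On f f' D) {x₀ : X} (hx₀ : x₀ ∈ D)
    (f'' : X → X →L[ℝ] (X →L[ℝ] ℝ))
    (hf'' : IsGateauxDerivOn f' f'' D) (hcont : ContinuousAt f'' x₀) (d : X) :
    secondSubdiff f' x₀ d = {f'' x₀ d} := by
  have hf'₀ : HasStrictFDerivAt f' (f'' x₀) x₀ := hf''.hasStrictFDerivAt (hD.mem_nhds hx₀) hcont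
  have hsymm : ∀ v w, f'' x₀ v w = f'' x₀ w v :=
    second_derivative_symmetric_of_eventually (hf.eventually_hasFDerivAt hD hx₀) hf'₀.hasFDerivAt
  have hd : HasStrictFDerivAt (fun x => f' x d) ((f'' x₀).flip d) x₀ := by
    simpa using hf'₀.clm_apply (hasStrictFDerivAt_const d x₀)
  exact clarkeSubdiff_eq_singleton fun v => (hd.clarkeDeriv_eq v).trans (hsymm v d)
end

section
/- (Second-order mean value theorem) Let X be a Banach space, D ⊆ X open, and f ∈ C^{1,1}(D). For every a, b ∈ D with the segment [a, b] contained in D, there exist ξ in the open segment (a, b) and L ∈ ∂²f(ξ)(b−a) such that f(b) − f(a) − ⟨f'(a), b−a⟩ = ½⟨L, b−a⟩. -/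
open Filter Set

/-!
Restrict to the line `t ↦ a + t • d`, `d = b - a`: put `g t = f (a + t • d)`, so that
`g' = φ` with `φ t = f' (a + t • d) d`, and `r = g 1 - g 0 - φ 0`. Rolle's theorem for the Taylor
remainder `g t - g 0 - t φ 0 - t² r` gives `τ ∈ (0, 1)` with `φ τ - φ 0 = 2 τ r`, so
`θ t = φ t - 2 r t` takes the same value at `0` and `τ` and has an interior local extremum `c`.
At `ξ = a + c • d`, one-sided difference quotients of `ψ = f' · d` along the line give
`2 r ≤ ψ°(ξ; d)` and `-2 r ≤ ψ°(ξ; -d)`. As `ψ` is Lipschitz near `ξ`, `ψ°(ξ; ·)` is sublinear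
and bounded by a multiple of the norm, and Hahn–Banach extends `d ↦ 2 r` to some `L ∈ ∂ψ(ξ)`.
-/

open scoped Topology

lemma isBoundedUnder_le_and_ge_of_eventually_abs_le {α : Type*} {F : Filter α} {u : α → ℝ}
    {C : ℝ} (h : ∀ᶠ x in F, |u x| ≤ C) :
    IsBoundedUnder (· ≤ ·) F u ∧ IsBoundedUnder (· ≥ ·) F u :=
  isBoundedUnder_le_abs.1 (isBoundedUnder_of_eventually_le h)

theorem exists_continuousLinearMap_le_sublinear_apply_eq {E : Type*} [NormedAddCommGroup E]
    [NormedSpace ℝ E] (N : E → ℝ) (N_hom : ∀ c : ℝ, 0 < c → ∀ x, N (c • x) = c * N x)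
    (N_add : ∀ x y, N (x + y) ≤ N x + N y) {C : ℝ} (N_le : ∀ x, N x ≤ C * ‖x‖) {d : E} {s : ℝ}
    (hs : s ≤ N d) (hs' : -s ≤ N (-d)) :
    ∃ L : E →L[ℝ] ℝ, (∀ x, L x ≤ N x) ∧ L d = s := by
  have N_zero : N 0 = 0 := by
    have := N_hom 2 two_pos 0
    rw [smul_zero] at this
    linarith
  -- `d ↦ s` is well defined on `ℝ ∙ d`: for `d = 0` the hypotheses force `s = 0`.
  have H : ∀ c : ℝ, c • d = 0 → c • s = 0 := by
    intro c hc
    rcases smul_eq_zero.1 hc with rfl | rfl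
    · exact zero_smul ℝ s
    · rw [neg_zero, N_zero] at hs'
      rw [N_zero] at hs
      rw [le_antisymm hs (by linarith), smul_zero]
  set f₀ := LinearPMap.mkSpanSingleton' (σ := RingHom.id ℝ) d s H
  have hf₀ : ∀ z : f₀.domain, f₀ z ≤ N z := by
    rintro ⟨z, hz⟩
    obtain ⟨α, rfl⟩ := Submodule.mem_span_singleton.1 hz
    rw [LinearPMap.mkSpanSingleton'_apply, RingHom.id_apply, smul_eq_mul]
    change α * s ≤ N (α • d)
    rcases lt_trichotomy α 0 with hα | rfl | hα
    · rw [show α • d = (-α) • -d by rw [smul_neg, neg_smul, neg_neg], N_hom _ (neg_pos.2 hα)]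
      nlinarith
    · simp [N_zero]
    · rw [N_hom α hα]
      exact mul_le_mul_of_nonneg_left hs hα.le
  obtain ⟨g, hg_ext, hg_le⟩ := exists_extension_of_le_sublinear f₀ N N_hom N_add hf₀
  have hg_bound : ∀ x, ‖g x‖ ≤ C * ‖x‖ := by
    intro x
    rw [Real.norm_eq_abs, abs_le]
    have := (hg_le (-x)).trans (N_le (-x))
    rw [map_neg, norm_neg] at this
    exact ⟨by linarith, (hg_le x).trans (N_le x)⟩
  refine ⟨g.mkContinuous C hg_bound, hg_le, ?_⟩
  rw [LinearMap.mkContinuous_apply, hg_ext ⟨d, Submodule.mem_span_singleton_self d⟩]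
  exact LinearPMap.mkSpanSingleton'_apply_self d s H _

section ClarkeFilter

variable {X : Type*} [TopologicalSpace X]

def clarkeFilter (ξ : X) : Filter (X × ℝ) := 𝓝 ξ ×ˢ 𝓝[>] 0

instance clarkeFilter.neBot (ξ : X) : (clarkeFilter ξ).NeBot := by
  unfold clarkeFilter; infer_instance

theorem eventually_pos_snd_clarkeFilter (ξ : X) : ∀ᶠ p in clarkeFilter ξ, 0 < p.2 :=
  (eventually_mem_nhdsWithin : ∀ᶠ l in 𝓝[>] (0 : ℝ), 0 < l).prod_inr _

theorem map_rescale_clarkeFilter (ξ : X) {c : ℝ} (hc : 0 < c) :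
    map (Prod.map id (c * ·)) (clarkeFilter ξ) = clarkeFilter ξ := by
  rw [clarkeFilter, ← prod_map_right]
  congr 1
  nth_rw 1 [← comap_mulLeft_nhdsGT_zero hc]
  exact map_comap_of_surjective (mul_left_surjective₀ hc.ne') _

end ClarkeFilter

section Clarke

variable {X : Type*} [NormedAddCommGroup X] [NormedSpace ℝ X]

noncomputable def clarkeQuotient (ψ : X → ℝ) (h : X) (p : X × ℝ) : ℝ :=
  (ψ (p.1 + p.2 • h) - ψ p.1) / p.2

theorem clarkeDeriv_eq_limsup (ψ : X → ℝ) (ξ h : X) :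
    clarkeDeriv ψ ξ h = limsup (clarkeQuotient ψ h) (clarkeFilter ξ) := rfl

variable {ψ : X → ℝ} {ξ : X} {U : Set X} {K : NNReal}

theorem tendsto_fst_add_smul_clarkeFilter (ξ h : X) :
    Tendsto (fun p : X × ℝ => p.1 + p.2 • h) (clarkeFilter ξ) (𝓝 ξ) := by
  have := (tendsto_fst (f := 𝓝 ξ) (g := 𝓝[>] (0 : ℝ))).add
    ((tendsto_snd.mono_right nhdsWithin_le_nhds).smul_const h)
  rw [clarkeFilter]
  simpa using this

theorem tendsto_shift_clarkeFilter (ξ h : X) :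
    Tendsto (fun p : X × ℝ => (p.1 + p.2 • h, p.2)) (clarkeFilter ξ) (clarkeFilter ξ) :=
  (tendsto_fst_add_smul_clarkeFilter ξ h).prodMk tendsto_snd

theorem eventually_abs_clarkeQuotient_le (hU : U ∈ 𝓝 ξ) (hψ : LipschitzOnWith K ψ U) (h : X) :
    ∀ᶠ p in clarkeFilter ξ, |clarkeQuotient ψ h p| ≤ K * ‖h‖ := by
  filter_upwards [(tendsto_fst (g := 𝓝[>] (0 : ℝ))).eventually_mem hU,
    (tendsto_fst_add_smul_clarkeFilter ξ h).eventually_mem hU,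
    eventually_pos_snd_clarkeFilter ξ] with p hp hph ht
  rw [clarkeQuotient, abs_div, abs_of_pos ht, div_le_iff₀ ht, ← Real.dist_eq]
  calc dist (ψ (p.1 + p.2 • h)) (ψ p.1) ≤ K * dist (p.1 + p.2 • h) p.1 := hψ.dist_le_mul _ hph _ hp
    _ = K * ‖h‖ * p.2 := by
      rw [dist_eq_norm, add_sub_cancel_left, norm_smul, Real.norm_of_nonneg ht.le]; ring

theorem clarkeDeriv_le (hU : U ∈ 𝓝 ξ) (hψ : LipschitzOnWith K ψ U) (h : X) :
    clarkeDeriv ψ ξ h ≤ K * ‖h‖ := by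
  have hbound := eventually_abs_clarkeQuotient_le hU hψ h
  exact limsup_le_of_le
    (isBoundedUnder_le_and_ge_of_eventually_abs_le hbound).2.isCoboundedUnder_le
    (hbound.mono fun _ hp => (abs_le.1 hp).2)

theorem le_clarkeDeriv_of_tendsto (hU : U ∈ 𝓝 ξ) (hψ : LipschitzOnWith K ψ U) {h : X}
    {m : ℝ → X × ℝ} (hm : Tendsto m (𝓝[>] 0) (clarkeFilter ξ)) {s : ℝ}
    (hs : ∀ᶠ l in 𝓝[>] 0, s ≤ clarkeQuotient ψ h (m l)) :
    s ≤ clarkeDeriv ψ ξ h :=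
  le_limsup_of_frequently_le (hm.frequently hs.frequently)
    (isBoundedUnder_le_and_ge_of_eventually_abs_le (eventually_abs_clarkeQuotient_le hU hψ h)).1

theorem clarkeDeriv_add_le (hU : U ∈ 𝓝 ξ) (hψ : LipschitzOnWith K ψ U) (h₁ h₂ : X) :
    clarkeDeriv ψ ξ (h₁ + h₂) ≤ clarkeDeriv ψ ξ h₁ + clarkeDeriv ψ ξ h₂ := by
  have hm := tendsto_shift_clarkeFilter ξ h₂
  set v := clarkeQuotient ψ h₁ ∘ fun p : X × ℝ => (p.1 + p.2 • h₂, p.2)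
  have hq₁ := isBoundedUnder_le_and_ge_of_eventually_abs_le
    (eventually_abs_clarkeQuotient_le hU hψ h₁)
  have hq₂ := isBoundedUnder_le_and_ge_of_eventually_abs_le
    (eventually_abs_clarkeQuotient_le hU hψ h₂)
  have hv := isBoundedUnder_le_and_ge_of_eventually_abs_le
    (hm.eventually (eventually_abs_clarkeQuotient_le hU hψ h₁))
  have hsplit : clarkeQuotient ψ (h₁ + h₂) = v + clarkeQuotient ψ h₂ := by
    ext p
    have hpt : p.1 + p.2 • (h₁ + h₂) = p.1 + p.2 • h₂ + p.2 • h₁ := by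
      rw [smul_add]; abel
    simp only [v, clarkeQuotient, Function.comp_apply, Pi.add_apply, hpt]
    rw [← add_div, sub_add_sub_cancel]
  rw [clarkeDeriv_eq_limsup, clarkeDeriv_eq_limsup, clarkeDeriv_eq_limsup, hsplit]
  refine (limsup_add_le hv.2 hv.1 hq₂.2.isCoboundedUnder_le hq₂.1).trans ?_
  have hv_le : limsup v (clarkeFilter ξ) ≤ limsup (clarkeQuotient ψ h₁) (clarkeFilter ξ) :=
    hm.limsup_comp_le_limsup (by rw [IsCoboundedUnder, map_map]; exact hv.2.isCoboundedUnder_le)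
      hq₁.1
  exact add_le_add hv_le le_rfl

theorem clarkeDeriv_smul (hU : U ∈ 𝓝 ξ) (hψ : LipschitzOnWith K ψ U) {c : ℝ} (hc : 0 < c)
    (h : X) : clarkeDeriv ψ ξ (c • h) = c * clarkeDeriv ψ ξ h := by
  have hq := isBoundedUnder_le_and_ge_of_eventually_abs_le
    (eventually_abs_clarkeQuotient_le hU hψ h)
  have hscale : clarkeQuotient ψ (c • h) =ᶠ[clarkeFilter ξ]
      ((c * ·) ∘ clarkeQuotient ψ h) ∘ Prod.map id (c * ·) := by
    filter_upwards [eventually_pos_snd_clarkeFilter ξ] with p hp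
    simp only [clarkeQuotient, Function.comp_apply, Prod.map_fst, Prod.map_snd, id, smul_smul,
      mul_comm p.2 c]
    field_simp
  rw [clarkeDeriv_eq_limsup, clarkeDeriv_eq_limsup, limsup_congr hscale, limsup_comp,
    map_rescale_clarkeFilter ξ hc]
  exact ((monotone_mul_left_of_nonneg hc.le).map_limsup_of_continuousAt _
    (continuous_const_mul c).continuousAt hq.1 hq.2.isCoboundedUnder_le).symm

theorem exists_mem_clarkeSubdiff_apply_eq (hU : U ∈ 𝓝 ξ) (hψ : LipschitzOnWith K ψ U) {d : X}
    {s : ℝ} (hs : s ≤ clarkeDeriv ψ ξ d) (hs' : -s ≤ clarkeDeriv ψ ξ (-d)) :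
    ∃ L ∈ clarkeSubdiff ψ ξ, L d = s :=
  exists_continuousLinearMap_le_sublinear_apply_eq (clarkeDeriv ψ ξ)
    (fun _ hc => clarkeDeriv_smul hU hψ hc) (clarkeDeriv_add_le hU hψ) (clarkeDeriv_le hU hψ)
    hs hs'

theorem le_clarkeDeriv_of_eventually_le {a d : X} {c s : ℝ} (hU : U ∈ 𝓝 (a + c • d))
    (hψ : LipschitzOnWith K ψ U) {σ : ℝ → ℝ} (hσ : Tendsto σ (𝓝[>] 0) (𝓝 c))
    (hle : ∀ᶠ l in 𝓝[>] 0, l * s ≤ ψ (a + (σ l + l) • d) - ψ (a + σ l • d)) :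
    s ≤ clarkeDeriv ψ (a + c • d) d := by
  refine le_clarkeDeriv_of_tendsto hU hψ (m := fun l => (a + σ l • d, l))
    (((hσ.smul_const d).const_add a).prodMk tendsto_id) ?_
  filter_upwards [hle, eventually_mem_nhdsWithin] with l hl (hl0 : 0 < l)
  rw [clarkeQuotient, le_div_iff₀ hl0, add_assoc, ← add_smul, mul_comm]
  exact hl

theorem le_clarkeDeriv_of_isLocalExtr {a d : X} {c s : ℝ} (hU : U ∈ 𝓝 (a + c • d))
    (hψ : LipschitzOnWith K ψ U) (hextr : IsLocalExtr (fun t => ψ (a + t • d) - t * s) c) :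
    s ≤ clarkeDeriv ψ (a + c • d) d := by
  have hright : Tendsto (c + ·) (𝓝[>] 0) (𝓝 c) :=
    ((continuous_const_add c).tendsto' 0 c (add_zero c)).mono_left nhdsWithin_le_nhds
  have hleft : Tendsto (c - ·) (𝓝[>] 0) (𝓝 c) :=
    ((continuous_const.sub continuous_id).tendsto' 0 c (sub_zero c)).mono_left nhdsWithin_le_nhds
  -- At a minimum use the quotients based at `ξ`, at a maximum those based at `ξ - l • d`.
  rcases hextr with hmin | hmax
  · refine le_clarkeDeriv_of_eventually_le hU hψ tendsto_const_nhds ?_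
    filter_upwards [hright.eventually hmin] with l hl
    linarith
  · refine le_clarkeDeriv_of_eventually_le hU hψ hleft ?_
    filter_upwards [hleft.eventually hmax] with l hl
    simp only [sub_add_cancel]
    linarith

theorem neg_le_clarkeDeriv_neg_of_isLocalExtr {a d : X} {c s : ℝ} (hU : U ∈ 𝓝 (a + c • d))
    (hψ : LipschitzOnWith K ψ U) (hextr : IsLocalExtr (fun t => ψ (a + t • d) - t * s) c) :
    -s ≤ clarkeDeriv ψ (a + c • d) (-d) := by
  -- Reparametrize the line by `t ↦ -t`.
  have hξ : a + c • d = a + (-c) • -d := by rw [neg_smul_neg]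
  have hextr' : IsLocalExtr (fun t => ψ (a + t • -d) - t * -s) (-c) := by
    rw [← neg_neg c] at hextr
    convert hextr.comp_continuous continuous_neg.continuousAt using 2 with t
    simp [smul_neg, neg_smul]
  rw [hξ] at hU ⊢
  exact le_clarkeDeriv_of_isLocalExtr hU hψ hextr'

end Clarke

theorem exists_isLocalExtr_sub_mul_of_hasDerivAt {g φ : ℝ → ℝ}
    (hg : ∀ t ∈ Icc (0 : ℝ) 1, HasDerivAt g (φ t) t) (hφ : ContinuousOn φ (Icc 0 1)) :
    ∃ c ∈ Ioo (0 : ℝ) 1, IsLocalExtr (fun t => φ t - t * (2 * (g 1 - g 0 - φ 0))) c := by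
  set r := g 1 - g 0 - φ 0
  have hρ : ∀ t ∈ Icc (0 : ℝ) 1,
      HasDerivAt (fun t => g t - t * φ 0 - t ^ 2 * r) (φ t - φ 0 - 2 * t * r) t := by
    intro t ht
    exact (((hg t ht).sub ((hasDerivAt_id' t).mul_const (φ 0))).sub
      ((hasDerivAt_pow 2 t).mul_const r)).congr_deriv (by push_cast; ring)
  obtain ⟨τ, hτ, hτ0⟩ := exists_hasDerivAt_eq_zero zero_lt_one
    (fun t ht => (hρ t ht).continuousAt.continuousWithinAt) (by simp [r])
    (fun t ht => hρ t (Ioo_subset_Icc_self ht))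
  obtain ⟨c, hc, hextr⟩ := exists_isLocalExtr_Ioo (f := fun t => φ t - t * (2 * r)) hτ.1
    ((hφ.mono (Icc_subset_Icc_right hτ.2.le)).sub (by fun_prop)) (by linarith)
  exact ⟨c, ⟨hc.1, hc.2.trans hτ.2⟩, hextr⟩

section LocallyLipschitzOnSet

variable {X E : Type*} [NormedAddCommGroup X] [NormedSpace ℝ X] [NormedAddCommGroup E]
  {g : X → E} {D : Set X}

theorem LocallyLipschitzOnSet.exists_mem_nhds_lipschitzOnWith (hg : LocallyLipschitzOnSet g D)
    (hD : IsOpen D) {x : X} (hx : x ∈ D) : ∃ K, ∃ U ∈ 𝓝 x, LipschitzOnWith K g U := by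
  obtain ⟨ε, hε, K, hK⟩ := hg x hx
  exact ⟨K, _, inter_mem (Metric.ball_mem_nhds x hε) (hD.mem_nhds hx), hK⟩

theorem LocallyLipschitzOnSet.continuousOn (hg : LocallyLipschitzOnSet g D) (hD : IsOpen D) :
    ContinuousOn g D := fun _ hx =>
  let ⟨_, _, hU, hK⟩ := hg.exists_mem_nhds_lipschitzOnWith hD hx
  (hK.continuousOn.continuousAt hU).continuousWithinAt

end LocallyLipschitzOnSet

theorem IsGateauxDerivOn.hasDerivAt_comp_line {X E : Type*} [NormedAddCommGroup X]
    [NormedSpace ℝ X] [NormedAddCommGroup E] [NormedSpace ℝ E] {f : X → E}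
    {f' : X → X →L[ℝ] E} {D : Set X} (hf : IsGateauxDerivOn f f' D) {a d : X} {t : ℝ}
    (ht : a + t • d ∈ D) : HasDerivAt (fun u : ℝ => f (a + u • d)) (f' (a + t • d) d) t := by
  have hshift := HasDerivAt.comp_sub_const t t ((sub_self t).symm ▸ hf _ ht d)
  convert hshift using 2 with u
  rw [add_assoc, ← add_smul, add_sub_cancel]

theorem stmt6_general {X : Type*} [NormedAddCommGroup X] [NormedSpace ℝ X]
    {D : Set X} (hD : IsOpen D) (f : X → ℝ) (f' : X → X →L[ℝ] ℝ)
    (hf : IsC11On f f' D) (a b : X)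
    (hseg : segment ℝ a b ⊆ D) :
    ∃ ξ ∈ openSegment ℝ a b, ∃ L ∈ secondSubdiff f' ξ (b - a),
      f b - f a - f' a (b - a) = (1 / 2) * L (b - a) := by
  set d := b - a
  have hline : MapsTo (fun t : ℝ => a + t • d) (Icc 0 1) D := fun t ht =>
    hseg (by rw [segment_eq_image']; exact ⟨t, ht, rfl⟩)
  have hψ : ContinuousOn (fun x => f' x d) D :=
    (ContinuousLinearMap.apply ℝ ℝ d).continuous.comp_continuousOn (hf.2.continuousOn hD)
  obtain ⟨c, hc, hextr⟩ := exists_isLocalExtr_sub_mul_of_hasDerivAt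
    (fun t ht => hf.1.hasDerivAt_comp_line (hline ht)) (hψ.comp (by fun_prop) hline)
  obtain ⟨K, U, hU, hK⟩ := hf.2.exists_mem_nhds_lipschitzOnWith hD (hline (Ioo_subset_Icc_self hc))
  have hKd := (ContinuousLinearMap.apply ℝ ℝ d).lipschitz.comp_lipschitzOnWith hK
  obtain ⟨L, hL, hLd⟩ := exists_mem_clarkeSubdiff_apply_eq hU hKd
    (le_clarkeDeriv_of_isLocalExtr hU hKd hextr)
    (neg_le_clarkeDeriv_neg_of_isLocalExtr hU hKd hextr)
  refine ⟨a + c • d, by rw [openSegment_eq_image']; exact ⟨c, hc, rfl⟩, L, hL, ?_⟩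
  rw [hLd]
  simp [d]

/-- Second-order mean value theorem. -/
theorem stmt6 {X : Type*} [NormedAddCommGroup X] [NormedSpace ℝ X] [CompleteSpace X]
    {D : Set X} (hD : IsOpen D) (f : X → ℝ) (f' : X → X →L[ℝ] ℝ)
    (hf : IsC11On f f' D) (a b : X) (ha : a ∈ D) (hb : b ∈ D)
    (hseg : segment ℝ a b ⊆ D) :
    ∃ ξ ∈ openSegment ℝ a b, ∃ L ∈ secondSubdiff f' ξ (b - a),
      f b - f a - f' a (b - a) = (1 / 2) * L (b - a) :=
  stmt6_general hD f f' hf a b hseg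
end

section
/- Let γ : X → ℝ be convex and upper semicontinuous on a real Banach (or locally convex) space X, and let C := {x ∈ X : γ(x) < 0}. Then C is open and convex; and if C is nonempty, then the adjoint set C⁺ equals {φ : X → ℝ affine : there exists μ ≥ 0 with φ(x) + μγ(x) ≥ 0 for all x ∈ X}. -/
open Filter Set

/-- `φ : X → ℝ` is a continuous affine function. -/
def IsAffineFn {X : Type*} [NormedAddCommGroup X] [NormedSpace ℝ X] (φ : X → ℝ) : Prop :=
  ∃ (x' : X →L[ℝ] ℝ) (t : ℝ), ∀ x, φ x = x' x + t

/-- The adjoint set `C⁺` of a set `C`: continuous affine functions nonnegative on `C`. -/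
def adjointSet {X : Type*} [NormedAddCommGroup X] [NormedSpace ℝ X] (C : Set X) :
    Set (X → ℝ) :=
  {φ | IsAffineFn φ ∧ ∀ x ∈ C, 0 ≤ φ x}

/-!
Let `φ` be affine and nonnegative on `C = {γ < 0}` and take `μ := inf_{z ∈ C} φ z / (-γ z)`.
On `C` the inequality `φ + μ γ ≥ 0` is the definition of `μ`. For `γ x ≥ 0` and `z ∈ C`, the
segment from `z` to `x` stays in `C` up to the point `p` where the convex upper bound of `γ`
along it vanishes, so `φ p ≥ 0` by continuity; since `φ` is affine this reads
`γ x * φ z - γ z * φ x ≥ 0`, i.e. `φ x + γ x * (φ z / -γ z) ≥ 0`, and passing to the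
infimum over `z` gives `φ x + μ γ x ≥ 0`.
-/

lemma nonneg_of_forall_mem_Ico_nonneg {g : ℝ → ℝ} (hg : Continuous g) {a b : ℝ} (hab : a < b)
    (h : ∀ s ∈ Ico a b, 0 ≤ g s) : 0 ≤ g b := by
  have hclosed : IsClosed {s | 0 ≤ g s} := isClosed_le continuous_const hg
  have hIcc : Icc a b ⊆ {s | 0 ≤ g s} := closure_Ico hab.ne ▸ hclosed.closure_subset_iff.2 h
  exact hIcc (right_mem_Icc.2 hab.le)

section Affine

variable {X : Type*} [NormedAddCommGroup X] [NormedSpace ℝ X] {φ γ : X → ℝ}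

lemma IsAffineFn.apply_sub_smul_add_smul (hφ : IsAffineFn φ) (s : ℝ) (u v : X) :
    φ ((1 - s) • u + s • v) = (1 - s) * φ u + s * φ v := by
  obtain ⟨x', t, hφ⟩ := hφ
  simp only [hφ, map_add, map_smul, smul_eq_mul]
  ring

lemma IsAffineFn.mul_sub_mul_nonneg_of_nonneg_on_neg (hφ : IsAffineFn φ)
    (hγ : ConvexOn ℝ univ γ) (hpos : ∀ x, γ x < 0 → 0 ≤ φ x)
    {y x : X} (hy : γ y < 0) (hx : 0 ≤ γ x) : 0 ≤ γ x * φ y - γ y * φ x := by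
  set p : ℝ := γ y / (γ y - γ x)
  have hgap : γ y - γ x < 0 := by linarith
  have hp_pos : 0 < p := div_pos_of_neg_of_neg hy hgap
  have hp_le : p ≤ 1 := (div_le_one_of_neg hgap).2 (by linarith)
  have hp_mul : p * (γ y - γ x) = γ y := div_mul_cancel₀ _ hgap.ne
  have hseg : ∀ s ∈ Ico 0 p, 0 ≤ (1 - s) * φ y + s * φ x := by
    rintro s ⟨hs0, hsp⟩
    have hconv : γ ((1 - s) • y + s • x) ≤ (1 - s) * γ y + s * γ x :=
      hγ.2 (mem_univ y) (mem_univ x) (by linarith) hs0 (by ring)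
    have hneg : (1 - s) * γ y + s * γ x < 0 := by
      nlinarith [mul_lt_mul_of_neg_right hsp hgap]
    rw [← hφ.apply_sub_smul_add_smul]
    exact hpos _ (hconv.trans_lt hneg)
  have hp : 0 ≤ (1 - p) * φ y + p * φ x :=
    nonneg_of_forall_mem_Ico_nonneg (g := fun s => (1 - s) * φ y + s * φ x) (by fun_prop)
      hp_pos hseg
  have hscale : ((1 - p) * φ y + p * φ x) * (γ x - γ y) = γ x * φ y - γ y * φ x := by
    linear_combination (φ y - φ x) * hp_mul
  nlinarith

lemma exists_nonneg_add_mul_nonneg_of_mem_adjointSet (hγ : ConvexOn ℝ univ γ)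
    (hC : {x | γ x < 0}.Nonempty) (hφ : φ ∈ adjointSet {x | γ x < 0}) :
    ∃ μ : ℝ, 0 ≤ μ ∧ ∀ x, 0 ≤ φ x + μ * γ x := by
  obtain ⟨haff, hpos⟩ := hφ
  set S : Set ℝ := (fun z => φ z / -γ z) '' {x | γ x < 0}
  have hS_nonneg : ∀ r ∈ S, 0 ≤ r := by
    rintro _ ⟨z, hz, rfl⟩
    exact div_nonneg (hpos z hz) (neg_nonneg.2 (le_of_lt hz))
  have hS_ne : S.Nonempty := hC.image _
  have hS_bdd : BddBelow S := ⟨0, hS_nonneg⟩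
  refine ⟨sInf S, le_csInf hS_ne hS_nonneg, fun x => ?_⟩
  rcases lt_or_ge (γ x) 0 with hx | hx
  · have hle : sInf S ≤ φ x / -γ x := csInf_le hS_bdd ⟨x, hx, rfl⟩
    rw [le_div_iff₀ (neg_pos.2 hx)] at hle
    linarith
  · have hS_sub : S ⊆ {r | 0 ≤ φ x + r * γ x} := by
      rintro _ ⟨z, hz, rfl⟩
      have hz' : 0 < -γ z := neg_pos.2 hz
      have hz0 : γ z ≠ 0 := hz.ne
      have key := haff.mul_sub_mul_nonneg_of_nonneg_on_neg hγ hpos hz hx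
      have hquot : φ x + φ z / -γ z * γ x = (γ x * φ z - γ z * φ x) / -γ z := by
        field_simp
        ring
      rw [mem_ofPred_eq, hquot]
      exact div_nonneg key hz'.le
    have hclosed : IsClosed {r : ℝ | 0 ≤ φ x + r * γ x} :=
      isClosed_le continuous_const (by fun_prop)
    exact hclosed.closure_subset_iff.2 hS_sub (csInf_mem_closure hS_ne hS_bdd)

lemma mem_adjointSet_of_add_mul_nonneg (hφ : IsAffineFn φ) {μ : ℝ} (hμ : 0 ≤ μ)
    (h : ∀ x, 0 ≤ φ x + μ * γ x) : φ ∈ adjointSet {x | γ x < 0} := by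
  refine ⟨hφ, fun x (hx : γ x < 0) => ?_⟩
  nlinarith [h x, mul_nonneg hμ (neg_nonneg.2 hx.le)]

end Affine

theorem stmt13 {X : Type*} [NormedAddCommGroup X] [NormedSpace ℝ X]
    (γ : X → ℝ) (hconv : ConvexOn ℝ Set.univ γ) (husc : UpperSemicontinuous γ) :
    IsOpen {x : X | γ x < 0} ∧ Convex ℝ {x : X | γ x < 0} ∧
      ({x : X | γ x < 0}.Nonempty →
        adjointSet {x : X | γ x < 0} =
          {φ : X → ℝ | IsAffineFn φ ∧ ∃ μ : ℝ, 0 ≤ μ ∧ ∀ x, 0 ≤ φ x + μ * γ x}) := by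
  refine ⟨upperSemicontinuous_iff_isOpen_preimage.mp husc 0, by simpa using hconv.convex_lt 0,
    fun hC => Set.ext fun φ => ⟨fun hφ => ?_, fun hφ => ?_⟩⟩
  · exact ⟨hφ.1, exists_nonneg_add_mul_nonneg_of_mem_adjointSet hconv hC hφ⟩
  · obtain ⟨haff, μ, hμ, hφμ⟩ := hφ
    exact mem_adjointSet_of_add_mul_nonneg haff hμ hφμ
end

section
/- Let C₁, ..., C_N be nonempty convex subsets of a real normed space X, with C₁, ..., C_{N−1} open. Then ⋂_{i=1}^N C_i = ∅ if and only if there exist continuous affine functions φ₁, ..., φ_N : X → ℝ, not all constant, such that Σ_{i=1}^N φ_i = 0 and φ_i(x) ≥ 0 for all x ∈ C_i and each i = 1, ..., N. -/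
/-!
The sets `C₁ × ⋯ × C_{N-1}` (open) and the diagonal copy of `C_N` in `X^{N-1}` are disjoint
convex sets, so Hahn–Banach separates them by a functional `f = ∑ Fᵢ ∘ prᵢ`. With
`sᵢ = sup_{Cᵢ} Fᵢ` we get `∑ sᵢ ≤ inf_{C_N} ∑ Fᵢ`, so the affine functions `sᵢ - Fᵢ` (`i < N`)
and `∑ Fᵢ - ∑ sᵢ` do the job.
Conversely, at a common point every `φᵢ` vanishes, so for `i < N` it attains a local minimum
on the open set `Cᵢ` and is constant; then so is `φ_N = -∑_{i<N} φᵢ`.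
-/

open Filter Set Topology

theorem Real.sum_csSup_le_of_forall_sum_le {ι : Type*} [Fintype ι] {S : ι → Set ℝ} {u : ℝ}
    (hne : ∀ i, (S i).Nonempty) (h : ∀ a ∈ univ.pi S, ∑ i, a i ≤ u) :
    ∑ i, sSup (S i) ≤ u := by
  classical
  suffices ∀ (s : Finset ι) (u : ℝ), (∀ a ∈ (s : Set ι).pi S, ∑ i ∈ s, a i ≤ u) →
      ∑ i ∈ s, sSup (S i) ≤ u from this _ u (by simpa using h)
  intro s
  induction s using Finset.induction_on with
  | empty => intro u h; simpa using h 0 (by simp)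
  | insert j s hj ih =>
    intro u h
    rw [Finset.sum_insert hj]
    suffices sSup (S j) ≤ u - ∑ i ∈ s, sSup (S i) by linarith
    refine csSup_le (hne j) fun r hr => ?_
    suffices ∑ i ∈ s, sSup (S i) ≤ u - r by linarith
    refine ih _ fun a ha => ?_
    have := h (Function.update a j r) fun i hi => by
      rcases eq_or_ne i j with rfl | hij
      · simpa using hr
      · simpa [hij] using ha i (by simpa [hij] using hi)
    rw [Finset.sum_insert hj, Function.update_self, Finset.sum_update_of_notMem hj] at this
    linarith

theorem Real.bddAbove_of_forall_sum_le {ι : Type*} [Fintype ι] {S : ι → Set ℝ} {u : ℝ}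
    (hne : ∀ i, (S i).Nonempty) (h : ∀ a ∈ univ.pi S, ∑ i, a i ≤ u) (i : ι) :
    BddAbove (S i) := by
  classical
  choose a₀ ha₀ using hne
  refine ⟨u - ∑ j ∈ Finset.univ \ {i}, a₀ j, fun r hr => ?_⟩
  have := h (Function.update a₀ i r) fun j _ => by
    rcases eq_or_ne j i with rfl | hji
    · simpa using hr
    · simpa [hji] using ha₀ j
  rw [Finset.sum_update_of_mem (Finset.mem_univ i)] at this
  linarith

theorem ContinuousLinearMap.apply_eq_sum_comp_single {ι R X M : Type*} [Fintype ι] [DecidableEq ι]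
    [Semiring R] [TopologicalSpace X] [AddCommMonoid X] [Module R X] [TopologicalSpace M]
    [AddCommMonoid M] [Module R M] (f : (ι → X) →L[R] M) (y : ι → X) :
    f y = ∑ i, f.comp (ContinuousLinearMap.single R (fun _ => X) i) (y i) := by
  conv_lhs => rw [← Finset.univ_sum_single y]
  simp

theorem exists_sum_le_of_iInter_inter_eq_empty {ι X : Type*} [Fintype ι] [TopologicalSpace X]
    [AddCommGroup X] [Module ℝ X] [IsTopologicalAddGroup X] [ContinuousSMul ℝ X]
    {C : ι → Set X} {D : Set X} (hCne : ∀ i, (C i).Nonempty) (hDne : D.Nonempty)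
    (hCconv : ∀ i, Convex ℝ (C i)) (hDconv : Convex ℝ D) (hCopen : ∀ i, IsOpen (C i))
    (hCD : (⋂ i, C i) ∩ D = ∅) :
    ∃ (F : ι → X →L[ℝ] ℝ) (s : ι → ℝ), (∃ i, F i ≠ 0) ∧ (∀ i, ∀ x ∈ C i, F i x ≤ s i) ∧
      ∀ x ∈ D, ∑ i, s i ≤ ∑ i, F i x := by
  classical
  have hdisj : Disjoint (univ.pi C) ((fun x _ => x) '' D) := by
    refine disjoint_left.2 fun y hy ⟨x, hxD, hxy⟩ => ?_
    subst hxy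
    exact (eq_empty_iff_forall_notMem.1 hCD) x ⟨mem_iInter.2 fun i => hy i trivial, hxD⟩
  obtain ⟨f, u, hfA, hfB⟩ := geometric_hahn_banach_open (convex_pi fun i _ => hCconv i)
    (isOpen_set_pi finite_univ fun i _ => hCopen i)
    (hDconv.is_linear_image (LinearMap.pi fun _ => LinearMap.id).isLinear) hdisj
  set F : ι → X →L[ℝ] ℝ := fun i => f.comp (ContinuousLinearMap.single ℝ (fun _ => X) i)
  have hfF : ∀ y, f y = ∑ i, F i (y i) := f.apply_eq_sum_comp_single
  have hsum : ∀ a ∈ univ.pi fun i => F i '' C i, ∑ i, a i ≤ u := by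
    intro a ha
    choose y hyC hya using fun i => ha i trivial
    have := hfA y fun i _ => hyC i
    rw [hfF] at this
    simpa only [← hya] using this.le
  have hFne : ∀ i, (F i '' C i).Nonempty := fun i => (hCne i).image _
  refine ⟨F, fun i => sSup (F i '' C i), ?_, fun i x hx => ?_, fun x hx => ?_⟩
  · by_contra! hF
    obtain ⟨y, hy⟩ : (univ.pi C).Nonempty := univ_pi_nonempty_iff.2 hCne
    obtain ⟨x, hx⟩ := hDne
    have hA := hfA y hy
    have hB := hfB _ ⟨x, hx, rfl⟩
    simp only [hfF, hF, zero_apply, Finset.sum_const_zero] at hA hB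
    linarith
  · exact le_csSup (Real.bddAbove_of_forall_sum_le hFne hsum i) ⟨x, hx, rfl⟩
  · have := hfB _ ⟨x, hx, rfl⟩
    rw [hfF] at this
    exact (Real.sum_csSup_le_of_forall_sum_le hFne hsum).trans this

theorem ContinuousLinearMap.eq_zero_of_add_const_nonneg_nhds {X : Type*} [NormedAddCommGroup X]
    [NormedSpace ℝ X] {x' : X →L[ℝ] ℝ} {t : ℝ} {x : X} {U : Set X} (hU : U ∈ 𝓝 x)
    (hpos : ∀ y ∈ U, 0 ≤ x' y + t) (hx : x' x + t = 0) : x' = 0 := by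
  have hmin : IsLocalMin (fun y => x' y + t) x :=
    mem_of_superset hU fun y hy => by simpa [hx] using hpos y hy
  exact hmin.hasFDerivAt_eq_zero (x'.hasFDerivAt.add_const t)

theorem eq_zero_of_sum_affine_eq_zero_of_mem_iInter {ι X : Type*} [Fintype ι]
    [NormedAddCommGroup X] [NormedSpace ℝ X] {C : ι → Set X} {x' : ι → X →L[ℝ] ℝ} {t : ι → ℝ}
    {j : ι} (hopen : ∀ i ≠ j, IsOpen (C i)) (hsum : ∀ x, ∑ i, (x' i x + t i) = 0)
    (hpos : ∀ i, ∀ x ∈ C i, 0 ≤ x' i x + t i) {x : X} (hx : x ∈ ⋂ i, C i) (i : ι) :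
    x' i = 0 := by
  rw [mem_iInter] at hx
  have hzero : ∀ i, x' i x + t i = 0 := fun i =>
    (Finset.sum_eq_zero_iff_of_nonneg fun i _ => hpos i x (hx i)).1 (hsum x) i (Finset.mem_univ i)
  have hopen_zero : ∀ i ≠ j, x' i = 0 := fun i hi =>
    ContinuousLinearMap.eq_zero_of_add_const_nonneg_nhds ((hopen i hi).mem_nhds (hx i)) (hpos i)
      (hzero i)
  rcases ne_or_eq i j with hi | rfl
  · exact hopen_zero i hi
  ext y
  have hlin : ∑ k, x' k y = ∑ k, (x' k (x + y) + t k) - ∑ k, (x' k x + t k) := by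
    rw [← Finset.sum_sub_distrib]
    simp
  rwa [hsum, hsum, sub_zero, Finset.sum_eq_single_of_mem i (Finset.mem_univ i)
    fun k _ hk => by simp [hopen_zero k hk]] at hlin

theorem stmt14 {X : Type*} [NormedAddCommGroup X] [NormedSpace ℝ X]
    (N : ℕ) (hN : 0 < N) (C : Fin N → Set X)
    (hne : ∀ i, (C i).Nonempty) (hconv : ∀ i, Convex ℝ (C i))
    (hopen : ∀ i : Fin N, (i : ℕ) + 1 < N → IsOpen (C i)) :
    (⋂ i, C i) = ∅ ↔
      ∃ (x' : Fin N → X →L[ℝ] ℝ) (t : Fin N → ℝ),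
        (¬ ∀ i, x' i = 0) ∧
        (∀ x : X, ∑ i, (x' i x + t i) = 0) ∧
        (∀ i, ∀ x ∈ C i, 0 ≤ x' i x + t i) := by
  obtain ⟨n, rfl⟩ := Nat.exists_eq_add_one_of_ne_zero hN.ne'
  constructor
  · intro hempty
    have hCD : (⋂ i : Fin n, C i.castSucc) ∩ C (Fin.last n) = ∅ := by
      rw [← hempty]
      ext x
      simp [Fin.forall_fin_succ']
    obtain ⟨F, s, ⟨i, hi⟩, hC, hD⟩ := exists_sum_le_of_iInter_inter_eq_empty (fun i => hne _)
      (hne _) (fun i => hconv _) (hconv _) (fun i => hopen _ (by simp)) hCD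
    refine ⟨Fin.lastCases (∑ i, F i) fun i => -F i, Fin.lastCases (-∑ i, s i) s,
      fun h => hi (neg_eq_zero.1 (by simpa using h i.castSucc)), fun x => ?_, ?_⟩
    · simp [Fin.sum_univ_castSucc, Finset.sum_add_distrib]
    · refine Fin.forall_fin_succ'.2 ⟨fun i x hx => ?_, fun x hx => ?_⟩
      · simpa using hC i x hx
      · simpa [sum_apply] using hD x hx
  · rintro ⟨x', t, hx', hsum, hpos⟩
    refine not_nonempty_iff_eq_empty.1 fun ⟨x, hx⟩ => hx' fun i =>
      eq_zero_of_sum_affine_eq_zero_of_mem_iInter (j := Fin.last n)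
      (fun i hi => hopen i (by simpa using Fin.val_lt_last hi)) hsum hpos hx i
end

section
/- Let Q ⊆ X be closed convex with nonempty interior, x̂ ∈ Q, d ∈ cl cone(Q − x̂), and C := cone(cone(Q° − x̂) − d). Let φ(·) = −⟨x*, ·⟩ + t be a continuous affine function. Then φ is bounded from below on C if and only if x* ∈ N(Q; x̂) and ⟨x*, d⟩ = 0. Moreover, C⁺ = {φ(·) = −⟨x*, ·⟩ + t : x* ∈ N(Q; x̂), ⟨x*, d⟩ = 0, t ≥ 0}. -/
/-!
Everything reduces to the sign of `x'` on the cone `C`. An affine function `-x' + t` is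
bounded below on a cone exactly when `x' ≤ 0` there, and on `C = cone(cone(Q° - x₀) - d)`
this means `x' ≤ 0` on `Q° - x₀` together with `x' d ≥ 0`. Since `Q` is convex with nonempty
interior, `Q ⊆ cl Q°`, so the first condition is `x' ∈ N(Q; x₀)`; it then makes `x'`
nonpositive on `cl cone(Q - x₀) ∋ d`, which forces `x' d = 0`.
-/

open Filter Set Pointwise

/-- The cone generated by a set `S` (with nonnegative scalars). -/
def coneOf {X : Type*} [NormedAddCommGroup X] [NormedSpace ℝ X] (S : Set X) : Set X :=
  {y | ∃ t : ℝ, 0 ≤ t ∧ ∃ s ∈ S, y = t • s}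

/-- The second-order admissible variation set `Q°(x₀, d)` of a convex set `Q`. -/
def Qcirc {X : Type*} [NormedAddCommGroup X] [NormedSpace ℝ X]
    (Q : Set X) (x₀ d : X) : Set X :=
  {z | ∃ ε' > (0:ℝ), ∀ ε : ℝ, 0 < ε → ε < ε' → ∀ w : X, ‖w‖ < ε' →
    ∃ q ∈ Q, z = (ε ^ 2)⁻¹ • (q - x₀ - ε • d) + w}

/-- The normal cone to a convex set `Q` at `x₀`. -/
def normalCone {X : Type*} [NormedAddCommGroup X] [NormedSpace ℝ X]
    (Q : Set X) (x₀ : X) : Set (X →L[ℝ] ℝ) :=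
  {x' | ∀ y ∈ Q, x' y - x' x₀ ≤ 0}

section Cone

variable {X : Type*} [NormedAddCommGroup X] [NormedSpace ℝ X] {S : Set X}

lemma smul_mem_coneOf {z : X} (hz : z ∈ coneOf S) {c : ℝ} (hc : 0 ≤ c) : c • z ∈ coneOf S := by
  obtain ⟨s, hs, y, hy, rfl⟩ := hz
  exact ⟨c * s, mul_nonneg hc hs, y, hy, smul_smul c s y⟩

lemma zero_mem_coneOf (hS : S.Nonempty) : (0 : X) ∈ coneOf S :=
  let ⟨s, hs⟩ := hS
  ⟨0, le_rfl, s, hs, (zero_smul ℝ s).symm⟩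

lemma forall_coneOf_nonpos_iff (f : X →L[ℝ] ℝ) :
    (∀ z ∈ coneOf S, f z ≤ 0) ↔ ∀ s ∈ S, f s ≤ 0 := by
  refine ⟨fun h s hs => by simpa using h s ⟨1, zero_le_one, s, hs, (one_smul ℝ s).symm⟩, ?_⟩
  rintro h _ ⟨c, hc, s, hs, rfl⟩
  simpa only [map_smul, smul_eq_mul] using mul_nonpos_of_nonneg_of_nonpos hc (h s hs)

lemma exists_forall_coneOf_le_iff (f : X →L[ℝ] ℝ) (t : ℝ) :
    (∃ m : ℝ, ∀ z ∈ coneOf S, m ≤ -f z + t) ↔ ∀ z ∈ coneOf S, f z ≤ 0 := by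
  refine ⟨fun ⟨m, hm⟩ z hz => ?_, fun h => ⟨t, fun z hz => by linarith [h z hz]⟩⟩
  by_contra! hpos
  -- rescaling `z` by `c` below makes `-f + t` drop under `m`
  have hmt : m ≤ t := by simpa using hm _ (smul_mem_coneOf hz le_rfl)
  set c := (t - m + 1) / f z
  have hcz : c * f z = t - m + 1 := div_mul_cancel₀ _ hpos.ne'
  have hc : 0 ≤ c := div_nonneg (by linarith) hpos.le
  have := hm _ (smul_mem_coneOf hz hc)
  rw [map_smul, smul_eq_mul, hcz] at this
  linarith

lemma forall_sub_image_coneOf_nonpos_iff (hS : S.Nonempty) (f : X →L[ℝ] ℝ) (d : X) :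
    (∀ z ∈ (fun y => y - d) '' coneOf S, f z ≤ 0) ↔ (∀ s ∈ S, f s ≤ 0) ∧ 0 ≤ f d := by
  simp only [forall_mem_image, map_sub, sub_nonpos]
  refine ⟨fun h => ⟨?_, by simpa using h (zero_mem_coneOf hS)⟩, fun ⟨h, hd⟩ y hy => ?_⟩
  · rw [← forall_coneOf_nonpos_iff, ← exists_forall_coneOf_le_iff f (f d)]
    exact ⟨0, fun y hy => by linarith [h hy]⟩
  · linarith [(forall_coneOf_nonpos_iff f).2 h y hy]

lemma adjointSet_coneOf (hS : S.Nonempty) :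
    adjointSet (coneOf S) = {φ : X → ℝ | ∃ (x' : X →L[ℝ] ℝ) (t : ℝ),
      (∀ z ∈ coneOf S, x' z ≤ 0) ∧ 0 ≤ t ∧ ∀ z, φ z = -x' z + t} := by
  ext φ
  constructor
  · rintro ⟨⟨y', t, hφ⟩, hpos⟩
    refine ⟨-y', t, ?_, by simpa [hφ] using hpos 0 (zero_mem_coneOf hS), fun z => by simp [hφ]⟩
    exact (exists_forall_coneOf_le_iff (-y') t).1 ⟨0, fun z hz => by simpa [hφ] using hpos z hz⟩
  · rintro ⟨x', t, hx', ht, hφ⟩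
    exact ⟨⟨-x', t, fun z => by simp [hφ]⟩, fun z hz => by linarith [hφ z, hx' z hz]⟩

end Cone

section NormalCone

variable {X : Type*} [NormedAddCommGroup X] [NormedSpace ℝ X] {Q : Set X} {x₀ : X}

lemma mem_normalCone_iff_forall_interior (hQconv : Convex ℝ Q) (hQint : (interior Q).Nonempty)
    (f : X →L[ℝ] ℝ) :
    f ∈ normalCone Q x₀ ↔ ∀ s ∈ (fun q => q - x₀) '' interior Q, f s ≤ 0 := by
  simp only [forall_mem_image, map_sub]
  refine ⟨fun h q hq => h q (interior_subset hq), fun h y hy => ?_⟩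
  have hsub : closure (interior Q) ⊆ {y | f y - f x₀ ≤ 0} :=
    closure_minimal h (isClosed_le (by fun_prop) continuous_const)
  rw [hQconv.closure_interior_eq_closure_of_nonempty_interior hQint] at hsub
  exact hsub (subset_closure hy)

lemma apply_nonpos_of_mem_normalCone_of_mem_closure {f : X →L[ℝ] ℝ} (hf : f ∈ normalCone Q x₀)
    {d : X} (hd : d ∈ closure (coneOf ((fun q => q - x₀) '' Q))) : f d ≤ 0 := by
  refine closure_minimal (fun z hz => ?_) (isClosed_le f.continuous continuous_const) hd
  refine (forall_coneOf_nonpos_iff f).2 ?_ z hz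
  rintro _ ⟨q, hq, rfl⟩
  simpa using hf q hq

end NormalCone

theorem forall_coneOf_sub_coneOf_interior_nonpos_iff {X : Type*} [NormedAddCommGroup X]
    [NormedSpace ℝ X] {Q : Set X} (hQconv : Convex ℝ Q) (hQint : (interior Q).Nonempty) {x₀ d : X}
    (hd : d ∈ closure (coneOf ((fun q => q - x₀) '' Q))) (f : X →L[ℝ] ℝ) :
    (∀ z ∈ coneOf ((fun y => y - d) '' coneOf ((fun q => q - x₀) '' interior Q)), f z ≤ 0) ↔
      f ∈ normalCone Q x₀ ∧ f d = 0 := by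
  rw [forall_coneOf_nonpos_iff, forall_sub_image_coneOf_nonpos_iff (hQint.image _),
    ← mem_normalCone_iff_forall_interior hQconv hQint]
  exact and_congr_right fun hf =>
    ⟨fun h => le_antisymm (apply_nonpos_of_mem_normalCone_of_mem_closure hf hd) h, ge_of_eq⟩

theorem stmt17_general {X : Type*} [NormedAddCommGroup X] [NormedSpace ℝ X]
    (Q : Set X) (hQconv : Convex ℝ Q)
    (hQint : (interior Q).Nonempty) {x₀ : X} {d : X}
    (hd : d ∈ closure (coneOf ((fun q => q - x₀) '' Q))) :
    (∀ (x' : X →L[ℝ] ℝ) (t : ℝ),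
      ((∃ m : ℝ, ∀ z ∈ coneOf ((fun y => y - d) '' coneOf ((fun q => q - x₀) '' interior Q)),
          m ≤ -(x' z) + t) ↔
        (x' ∈ normalCone Q x₀ ∧ x' d = 0))) ∧
    adjointSet (coneOf ((fun y => y - d) '' coneOf ((fun q => q - x₀) '' interior Q))) =
      {φ : X → ℝ | ∃ (x' : X →L[ℝ] ℝ) (t : ℝ),
        x' ∈ normalCone Q x₀ ∧ x' d = 0 ∧ 0 ≤ t ∧ ∀ z, φ z = -(x' z) + t} := by
  have hC := forall_coneOf_sub_coneOf_interior_nonpos_iff hQconv hQint hd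
  refine ⟨fun x' t => (exists_forall_coneOf_le_iff x' t).trans (hC x'), ?_⟩
  rw [adjointSet_coneOf (Nonempty.image _ ⟨_, zero_mem_coneOf (hQint.image _)⟩)]
  simp_rw [hC, and_assoc]

theorem stmt17 {X : Type*} [NormedAddCommGroup X] [NormedSpace ℝ X]
    (Q : Set X) (hQc : IsClosed Q) (hQconv : Convex ℝ Q)
    (hQint : (interior Q).Nonempty) {x₀ : X} (hx₀ : x₀ ∈ Q) {d : X}
    (hd : d ∈ closure (coneOf ((fun q => q - x₀) '' Q))) :
    (∀ (x' : X →L[ℝ] ℝ) (t : ℝ),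
      ((∃ m : ℝ, ∀ z ∈ coneOf ((fun y => y - d) '' coneOf ((fun q => q - x₀) '' interior Q)),
          m ≤ -(x' z) + t) ↔
        (x' ∈ normalCone Q x₀ ∧ x' d = 0))) ∧
    adjointSet (coneOf ((fun y => y - d) '' coneOf ((fun q => q - x₀) '' interior Q))) =
      {φ : X → ℝ | ∃ (x' : X →L[ℝ] ℝ) (t : ℝ),
        x' ∈ normalCone Q x₀ ∧ x' d = 0 ∧ 0 ≤ t ∧ ∀ z, φ z = -(x' z) + t} :=
  stmt17_general Q hQconv hQint hd
end

section
/- Consider the constrained multiobjective problem: minimize F(x) = (f₁(x),...,f_m(x)) over x ∈ D subject to H(x) = 0 and G(x) ∈ Q, where D ⊆ X is open and Q ⊆ Z is closed convex. If x̂ is a weak Pareto efficient solution, then for every d ∈ X, the intersection (⋂_{j=1}^m W²_δ(f_j; x̂, d)) ∩ W²_α(Q₁; x̂, d) ∩ W²_τ(Q₂; x̂, d) is empty, where Q₁ := {x ∈ D : G(x) ∈ Q} and Q₂ := {x ∈ D : H(x) = 0}. -/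
open Filter Set

/-- Second-order descent variation set `W²_δ(f; x₀, d)` (relative to the domain `D`). -/
def Wdelta {X : Type*} [NormedAddCommGroup X] [NormedSpace ℝ X]
    (f : X → ℝ) (D : Set X) (x₀ d : X) : Set X :=
  {w' | ∃ ε' > (0:ℝ), ∀ ε : ℝ, 0 < ε → ε < ε' → ∀ w : X, ‖w‖ < ε' →
    x₀ + ε • d + (ε ^ 2) • (w' + w) ∈ D ∧
    f (x₀ + ε • d + (ε ^ 2) • (w' + w)) < f x₀}

/-- Second-order admissible variation set `W²_α(S; x₀, d)`. -/
def Walpha {X : Type*} [NormedAddCommGroup X] [NormedSpace ℝ X]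
    (S : Set X) (x₀ d : X) : Set X :=
  {w' | ∃ ε' > (0:ℝ), ∀ ε : ℝ, 0 < ε → ε < ε' → ∀ w : X, ‖w‖ < ε' →
    x₀ + ε • d + (ε ^ 2) • (w' + w) ∈ S}

/-- Second-order tangent variation set `W²_τ(S; x₀, d)`. -/
def Wtau {X : Type*} [NormedAddCommGroup X] [NormedSpace ℝ X]
    (S : Set X) (x₀ d : X) : Set X :=
  {w' | ∃ (εs : ℕ → ℝ) (ws : ℕ → X), (∀ n, 0 < εs n) ∧
    Filter.Tendsto εs Filter.atTop (nhds 0) ∧ Filter.Tendsto ws Filter.atTop (nhds 0) ∧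
    ∀ n, x₀ + εs n • d + (εs n ^ 2) • (w' + ws n) ∈ S}

theorem stmt18 {X Y Z : Type*} [NormedAddCommGroup X] [NormedSpace ℝ X]
    [NormedAddCommGroup Y] [NormedSpace ℝ Y] [NormedAddCommGroup Z] [NormedSpace ℝ Z]
    {D : Set X} (hD : IsOpen D) (m : ℕ) (f : Fin m → X → ℝ)
    (H : X → Y) (G : X → Z) (Q : Set Z) (hQc : IsClosed Q) (hQconv : Convex ℝ Q)
    {x₀ : X}
    (hfeas : x₀ ∈ D ∩ {x ∈ D | G x ∈ Q} ∩ {x ∈ D | H x = 0})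
    (hpareto : ¬ ∃ x ∈ D ∩ {x ∈ D | G x ∈ Q} ∩ {x ∈ D | H x = 0},
      ∀ j, f j x < f j x₀)
    (d : X) :
    (⋂ j, Wdelta (f j) D x₀ d) ∩ Walpha {x ∈ D | G x ∈ Q} x₀ d ∩
      Wtau {x ∈ D | H x = 0} x₀ d = ∅ := by
  rw [Set.eq_empty_iff_forall_notMem]
  rintro w' ⟨⟨hδ', hα⟩, hτ⟩
  have hδ := fun j => Set.mem_iInter.1 hδ' j
  obtain ⟨εα, hεα, hαprop⟩ := hα
  obtain ⟨εs, ws, hεpos, hεs, hws, hmem⟩ := hτ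
  choose εf hεf hfprop using hδ
  apply hpareto
  have hwsn : Tendsto (fun n => ‖ws n‖) atTop (nhds 0) := by simpa using hws.norm
  have h1 : ∀ᶠ n in atTop, ∀ j, εs n < εf j ∧ ‖ws n‖ < εf j := by
    rw [Filter.eventually_all]
    intro j
    exact (hεs.eventually_lt_const (hεf j)).and
      (hwsn.eventually_lt_const (hεf j))
  have h2 : ∀ᶠ n in atTop, εs n < εα ∧ ‖ws n‖ < εα :=
    (hεs.eventually_lt_const hεα).and (hwsn.eventually_lt_const hεα)
  obtain ⟨n, hn1, hn2⟩ := (h1.and h2).exists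
  refine ⟨x₀ + εs n • d + (εs n ^ 2) • (w' + ws n), ⟨⟨?_, ?_⟩, hmem n⟩, ?_⟩
  · rcases Nat.eq_zero_or_pos m with hm | hm
    · exact (hαprop (εs n) (hεpos n) hn2.1 (ws n) hn2.2).1
    · exact (hfprop ⟨0, hm⟩ (εs n) (hεpos n) (hn1 ⟨0, hm⟩).1 (ws n) (hn1 ⟨0, hm⟩).2).1
  · exact hαprop (εs n) (hεpos n) hn2.1 (ws n) hn2.2
  · intro j
    exact (hfprop j (εs n) (hεpos n) (hn1 j).1 (ws n) (hn1 j).2).2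
end
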